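/- Let E be a complex Banach algebra, n₀ a positive integer, r ∈ (0,1) and θ ∈ [0,∞). Suppose f : E → E satisfies f(0) = 0, ‖D_λ f(x,y)‖ ≤ θ(‖x‖^r + ‖y‖^r) for all x, y ∈ E and all λ ∈ T¹_{1/n₀}, ‖f(xy) − f(y)f(x)‖ ≤ θ(‖x‖^r + ‖y‖^r) for all x, y ∈ E, and for every x ∈ E the limits below exist and satisfy lim_{m→∞} 2^{−m} f(2^m · lim_{n→∞} 2^{−n} f(2^n x)) = x. Then there exists a unique involution I : E → E satisfying ‖I(x) − f(x)‖ ≤ (2θ/(2 − 2^r))·‖x‖^r for all x ∈ E. -/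

import Mathlib

open Filter Topology

/-- `D_λ f (x, y) = 2 conj(λ) f((x+y)/2) - f(λx) - f(λy)`. -/
noncomputable def jensenDiff {E : Type*} [NormedRing E] [NormedAlgebra ℂ E]
    (f : E → E) (l : ℂ) (x y : E) : E :=
  (2 * (starRingEnd ℂ) l) • f ((2 : ℂ)⁻¹ • (x + y)) - f (l • x) - f (l • y)

/-- The arc `T¹_{1/n₀} = {e^{iθ} : 0 ≤ θ ≤ 1/n₀}` of the unit circle. -/
def unitArc (n₀ : ℕ) : Set ℂ :=
  {l : ℂ | ∃ θ : ℝ, 0 ≤ θ ∧ θ ≤ 1 / (n₀ : ℝ) ∧ l = Complex.exp (θ * Complex.I)}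

/-- An involution on a complex algebra: conjugate-linear, anti-multiplicative,
and an involution of order two. -/
def IsInvolution {E : Type*} [NormedRing E] [NormedAlgebra ℂ E] (I : E → E) : Prop :=
  (∀ (x y : E) (l m : ℂ),
      I (l • x + m • y) = (starRingEnd ℂ) l • I x + (starRingEnd ℂ) m • I y) ∧
  (∀ x y : E, I (x * y) = I y * I x) ∧
  (∀ x : E, I (I x) = x)

/-!
Hyers' direct method. The doubling defect `‖f (2z) - 2 f z‖ ≤ θ 2^r ‖z‖^r` (Jensen at `λ = 1`,
`y = 0`) gives, by induction on `n`, `‖2⁻ⁿ f (2ⁿ x) - f x‖ ≤ θ 2^r / (2 - 2^r) ‖x‖^r`, and the limit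
`g` of these maps inherits the bound. Rescaling by `2⁻ⁿ` (resp. `4⁻ⁿ`) shrinks the Jensen
(resp. multiplicativity) defect of the `n`-th map by `(2^r/2)ⁿ` (resp. `(2^r/4)ⁿ`), so `g` solves
the Jensen equation on the arc and is anti-multiplicative exactly. Hence `g` is additive and
`g (λx) = conj λ g x` for `λ` on the arc; the scalars with this property form a subsemiring
of `ℂ`, which contains the whole circle (powers of arc points), every real in `[-2, 2]`
(as `e^{ia} + e^{-ia}`), hence all of `ℂ`. Uniqueness: the difference of two such maps
is `2`-homogeneous and `O(‖x‖^r)` with `r < 1`, hence zero.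
-/

lemma two_rpow_lt_two {r : ℝ} (hr : r < 1) : (2 : ℝ) ^ r < 2 := by
  simpa using Real.rpow_lt_rpow_of_exponent_lt one_lt_two hr

lemma tendsto_zero_of_norm_le_mul_pow {G : Type*} [SeminormedAddCommGroup G] {v : ℕ → G}
    {C q : ℝ} (hq0 : 0 ≤ q) (hq1 : q < 1) (hv : ∀ n, ‖v n‖ ≤ C * q ^ n) :
    Tendsto v atTop (𝓝 0) :=
  squeeze_zero_norm hv <| by
    simpa using (tendsto_pow_atTop_nhds_zero_of_lt_one hq0 hq1).const_mul C

section Doubling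

variable {F G : Type*} [NormedAddCommGroup F] [NormedSpace ℂ F]
  [NormedAddCommGroup G] [NormedSpace ℂ G]

lemma norm_two_pow_smul_rpow (n : ℕ) (x : F) (r : ℝ) :
    ‖(2 : ℂ) ^ n • x‖ ^ r = ((2 : ℝ) ^ r) ^ n * ‖x‖ ^ r := by
  rw [norm_smul, norm_pow, Complex.norm_two, Real.mul_rpow (by positivity) (norm_nonneg x),
    Real.rpow_pow_comm zero_le_two]

noncomputable def doublingSeq (f : F → G) (n : ℕ) (x : F) : G :=
  ((2 : ℂ) ^ n)⁻¹ • f ((2 : ℂ) ^ n • x)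

lemma doublingSeq_succ (f : F → G) (n : ℕ) (x : F) :
    doublingSeq f (n + 1) x = (2 : ℂ)⁻¹ • doublingSeq f n ((2 : ℂ) • x) := by
  rw [doublingSeq, doublingSeq, smul_smul, smul_smul, pow_succ, mul_inv, mul_comm (2⁻¹ : ℂ)]

lemma norm_doublingSeq_sub_le {f : F → G} {c r : ℝ} (hc : 0 ≤ c) (hr : r < 1)
    (hf : ∀ z, ‖f ((2 : ℂ) • z) - (2 : ℂ) • f z‖ ≤ c * ‖z‖ ^ r) (n : ℕ) (x : F) :
    ‖doublingSeq f n x - f x‖ ≤ c / (2 - 2 ^ r) * ‖x‖ ^ r := by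
  have hden : 0 < 2 - (2 : ℝ) ^ r := sub_pos.2 (two_rpow_lt_two hr)
  induction n generalizing x with
  | zero =>
    rw [doublingSeq, pow_zero, inv_one, one_smul, one_smul, sub_self, norm_zero]
    positivity
  | succ n ih =>
    have hsplit : doublingSeq f (n + 1) x - f x = (2 : ℂ)⁻¹ • (doublingSeq f n ((2 : ℂ) • x)
        - f ((2 : ℂ) • x)) + (2 : ℂ)⁻¹ • (f ((2 : ℂ) • x) - (2 : ℂ) • f x) := by
      rw [doublingSeq_succ, ← smul_add, sub_add_sub_cancel, smul_sub, smul_smul,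
        inv_mul_cancel₀ two_ne_zero, one_smul]
    calc ‖doublingSeq f (n + 1) x - f x‖
        ≤ 2⁻¹ * (c / (2 - 2 ^ r) * ‖(2 : ℂ) • x‖ ^ r) + 2⁻¹ * (c * ‖x‖ ^ r) := by
          rw [hsplit]
          refine (norm_add_le _ _).trans (add_le_add ?_ ?_) <;>
            rw [norm_smul, norm_inv, Complex.norm_two]
          · exact mul_le_mul_of_nonneg_left (ih _) (by norm_num)
          · exact mul_le_mul_of_nonneg_left (hf x) (by norm_num)
      _ = c / (2 - 2 ^ r) * ‖x‖ ^ r := by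
          rw [norm_smul, Complex.norm_two, Real.mul_rpow zero_le_two (norm_nonneg x)]
          field_simp
          ring

lemma norm_sub_le_of_tendsto_doublingSeq {f g : F → G} {c r : ℝ} (hc : 0 ≤ c) (hr : r < 1)
    (hf : ∀ z, ‖f ((2 : ℂ) • z) - (2 : ℂ) • f z‖ ≤ c * ‖z‖ ^ r)
    (hg : ∀ x, Tendsto (doublingSeq f · x) atTop (𝓝 (g x))) (x : F) :
    ‖g x - f x‖ ≤ c / (2 - 2 ^ r) * ‖x‖ ^ r :=
  le_of_tendsto ((hg x).sub_const (f x)).norm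
    (Eventually.of_forall fun n => norm_doublingSeq_sub_le hc hr hf n x)

lemma eq_zero_of_map_two_smul_of_norm_le {D : F → G} {M r : ℝ} (hr : r < 1)
    (hD2 : ∀ x, D ((2 : ℂ) • x) = (2 : ℂ) • D x) (hD : ∀ x, ‖D x‖ ≤ M * ‖x‖ ^ r) (x : F) :
    D x = 0 := by
  have hdecay : ∀ n x, ‖D x‖ ≤ M * ‖x‖ ^ r * ((2 : ℝ) ^ r / 2) ^ n := by
    intro n
    induction n with
    | zero => simpa using hD
    | succ n ih =>
      intro x
      calc ‖D x‖ = 2⁻¹ * ‖D ((2 : ℂ) • x)‖ := by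
            rw [hD2, norm_smul, Complex.norm_two, inv_mul_cancel_left₀ two_ne_zero]
        _ ≤ 2⁻¹ * (M * ‖(2 : ℂ) • x‖ ^ r * ((2 : ℝ) ^ r / 2) ^ n) := by gcongr; exact ih _
        _ = M * ‖x‖ ^ r * ((2 : ℝ) ^ r / 2) ^ (n + 1) := by
            rw [norm_smul, Complex.norm_two, Real.mul_rpow zero_le_two (norm_nonneg x)]
            ring
  have hq1 : (2 : ℝ) ^ r / 2 < 1 := by linarith [two_rpow_lt_two hr]
  exact tendsto_nhds_unique tendsto_const_nhds
    (tendsto_zero_of_norm_le_mul_pow (by positivity) hq1 (hdecay · x))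

end Doubling

section Algebra

variable {E : Type*} [NormedRing E] [NormedAlgebra ℂ E]

lemma norm_map_two_smul_sub_le {f : E → E} {θ r : ℝ} (hr : 0 < r) (hf0 : f 0 = 0)
    (hD : ∀ x y, ‖jensenDiff f 1 x y‖ ≤ θ * (‖x‖ ^ r + ‖y‖ ^ r)) (z : E) :
    ‖f ((2 : ℂ) • z) - (2 : ℂ) • f z‖ ≤ θ * 2 ^ r * ‖z‖ ^ r := by
  have hz : (2 : ℂ)⁻¹ • ((2 : ℂ) • z + 0) = z := by
    rw [add_zero, inv_smul_smul₀ two_ne_zero]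
  have h := hD ((2 : ℂ) • z) 0
  rw [jensenDiff, hz, map_one, mul_one, one_smul, one_smul, hf0, sub_zero,
    norm_sub_rev, norm_zero, Real.zero_rpow hr.ne', add_zero, norm_smul, Complex.norm_two,
    Real.mul_rpow zero_le_two (norm_nonneg z)] at h
  linarith

lemma jensenDiff_doublingSeq (f : E → E) (l : ℂ) (n : ℕ) (x y : E) :
    jensenDiff (doublingSeq f n) l x y =
      ((2 : ℂ) ^ n)⁻¹ • jensenDiff f l ((2 : ℂ) ^ n • x) ((2 : ℂ) ^ n • y) := by
  simp only [jensenDiff, doublingSeq, smul_sub, smul_add, smul_comm _ ((2 : ℂ) ^ n)]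
  rw [smul_comm ((2 : ℂ) ^ n)⁻¹]

lemma jensenDiff_eq_zero_of_tendsto {f g : E → E} {l : ℂ} {θ r : ℝ} (hr : r < 1)
    (hD : ∀ x y, ‖jensenDiff f l x y‖ ≤ θ * (‖x‖ ^ r + ‖y‖ ^ r))
    (hg : ∀ x, Tendsto (doublingSeq f · x) atTop (𝓝 (g x))) (x y : E) :
    jensenDiff g l x y = 0 := by
  have hlim : Tendsto (fun n => jensenDiff (doublingSeq f n) l x y) atTop
      (𝓝 (jensenDiff g l x y)) :=
    (((hg _).const_smul _).sub (hg _)).sub (hg _)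
  refine tendsto_nhds_unique hlim (tendsto_zero_of_norm_le_mul_pow (C := θ * (‖x‖ ^ r + ‖y‖ ^ r))
    (by positivity) (by linarith [two_rpow_lt_two hr] : (2 : ℝ) ^ r / 2 < 1) fun n => ?_)
  rw [jensenDiff_doublingSeq, norm_smul, norm_inv, norm_pow, Complex.norm_two]
  calc ((2 : ℝ) ^ n)⁻¹ * ‖jensenDiff f l ((2 : ℂ) ^ n • x) ((2 : ℂ) ^ n • y)‖
      ≤ ((2 : ℝ) ^ n)⁻¹ * (θ * (‖(2 : ℂ) ^ n • x‖ ^ r + ‖(2 : ℂ) ^ n • y‖ ^ r)) := by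
        gcongr; exact hD _ _
    _ = θ * (‖x‖ ^ r + ‖y‖ ^ r) * ((2 : ℝ) ^ r / 2) ^ n := by
        rw [norm_two_pow_smul_rpow, norm_two_pow_smul_rpow, div_pow]
        field_simp

lemma map_mul_rev_of_tendsto {f g : E → E} {θ r : ℝ} (hr : r < 2)
    (hmul : ∀ x y, ‖f (x * y) - f y * f x‖ ≤ θ * (‖x‖ ^ r + ‖y‖ ^ r))
    (hg : ∀ x, Tendsto (doublingSeq f · x) atTop (𝓝 (g x))) (x y : E) :
    g (x * y) = g y * g x := by
  have hxy : Tendsto (fun n => doublingSeq f (2 * n) (x * y)) atTop (𝓝 (g (x * y))) :=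
    (hg _).comp (strictMono_mul_left_of_pos two_pos).tendsto_atTop
  have hscale : ∀ n : ℕ, doublingSeq f (2 * n) (x * y) - doublingSeq f n y * doublingSeq f n x =
      ((2 : ℂ) ^ (2 * n))⁻¹ • (f (((2 : ℂ) ^ n • x) * ((2 : ℂ) ^ n • y))
        - f ((2 : ℂ) ^ n • y) * f ((2 : ℂ) ^ n • x)) := by
    intro n
    rw [doublingSeq, doublingSeq, doublingSeq, smul_mul_smul_comm, smul_mul_smul_comm, ← mul_inv,
      ← pow_add, ← two_mul, smul_sub]
  have hq1 : (2 : ℝ) ^ r / 4 < 1 := by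
    have := Real.rpow_lt_rpow_of_exponent_lt one_lt_two hr
    norm_num at this
    linarith
  refine sub_eq_zero.1 (tendsto_nhds_unique (hxy.sub ((hg y).mul (hg x)))
    (tendsto_zero_of_norm_le_mul_pow (C := θ * (‖x‖ ^ r + ‖y‖ ^ r)) (by positivity) hq1
      fun n => ?_))
  rw [hscale, norm_smul, norm_inv, norm_pow, Complex.norm_two]
  calc ((2 : ℝ) ^ (2 * n))⁻¹ * ‖f (((2 : ℂ) ^ n • x) * ((2 : ℂ) ^ n • y))
        - f ((2 : ℂ) ^ n • y) * f ((2 : ℂ) ^ n • x)‖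
      ≤ ((2 : ℝ) ^ (2 * n))⁻¹ * (θ * (‖(2 : ℂ) ^ n • x‖ ^ r + ‖(2 : ℂ) ^ n • y‖ ^ r)) := by
        gcongr; exact hmul _ _
    _ = θ * (‖x‖ ^ r + ‖y‖ ^ r) * ((2 : ℝ) ^ r / 4) ^ n := by
        rw [norm_two_pow_smul_rpow, norm_two_pow_smul_rpow, div_pow, pow_mul]
        field_simp
        ring

end Algebra

namespace Subsemiring

variable {S : Subsemiring ℂ} {n₀ : ℕ}

lemma exp_mul_I_mem_of_unitArc_subset (hn₀ : 0 < n₀) (h : unitArc n₀ ⊆ S) {s : ℝ}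
    (hs : 0 ≤ s) : Complex.exp (s * Complex.I) ∈ S := by
  set k : ℕ := ⌈s * n₀⌉₊ + 1
  have hk : (0 : ℝ) < k := by positivity
  have harc : Complex.exp ((s / k : ℝ) * Complex.I) ∈ unitArc n₀ := by
    refine ⟨s / k, by positivity, ?_, rfl⟩
    rw [div_le_div_iff₀ hk (by exact_mod_cast hn₀), one_mul]
    calc s * n₀ ≤ ⌈s * n₀⌉₊ := Nat.le_ceil _
      _ ≤ k := by simp [k]
  have hpow : Complex.exp (s * Complex.I) = Complex.exp ((s / k : ℝ) * Complex.I) ^ k := by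
    rw [← Complex.exp_nat_mul, Complex.ofReal_div, Complex.ofReal_natCast, ← mul_assoc,
      mul_div_cancel₀ _ (by exact_mod_cast hk.ne')]
  exact hpow ▸ pow_mem (h harc) k

lemma mem_of_norm_eq_one_of_unitArc_subset (hn₀ : 0 < n₀) (h : unitArc n₀ ⊆ S) {z : ℂ}
    (hz : ‖z‖ = 1) : z ∈ S := by
  have hexp : Complex.exp ((z.arg + 2 * Real.pi : ℝ) * Complex.I) = z := by
    rw [Complex.ofReal_add, add_mul, Complex.exp_add, Complex.ofReal_mul, Complex.ofReal_ofNat,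
      Complex.exp_two_pi_mul_I, mul_one]
    simpa [hz] using Complex.norm_mul_exp_arg_mul_I z
  exact hexp ▸ exp_mul_I_mem_of_unitArc_subset hn₀ h
    (by linarith [Complex.neg_pi_lt_arg z, Real.pi_pos])

lemma ofReal_mem_of_abs_le_two_of_unitArc_subset (hn₀ : 0 < n₀) (h : unitArc n₀ ⊆ S) {t : ℝ}
    (ht : |t| ≤ 2) : (t : ℂ) ∈ S := by
  obtain ⟨ht₁, ht₂⟩ := abs_le.1 ht
  set a := Real.arccos (t / 2)
  have hcos : Real.cos a = t / 2 := Real.cos_arccos (by linarith) (by linarith)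
  have hsum : Complex.exp (a * Complex.I) + Complex.exp ((-a : ℝ) * Complex.I) = t := by
    rw [Complex.ofReal_neg, Complex.exp_mul_I, Complex.exp_mul_I, Complex.cos_neg,
      Complex.sin_neg, ← Complex.ofReal_cos, hcos]
    push_cast
    ring
  exact hsum ▸ add_mem
    (mem_of_norm_eq_one_of_unitArc_subset hn₀ h (Complex.norm_exp_ofReal_mul_I a))
    (mem_of_norm_eq_one_of_unitArc_subset hn₀ h (Complex.norm_exp_ofReal_mul_I (-a)))

lemma ofReal_mem_of_unitArc_subset (hn₀ : 0 < n₀) (h : unitArc n₀ ⊆ S) (t : ℝ) :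
    (t : ℂ) ∈ S := by
  set m : ℕ := ⌈|t|⌉₊ + 1
  have hm : (0 : ℝ) < m := by positivity
  have hsmall : |t / m| ≤ 2 := by
    rw [abs_div, abs_of_pos hm, div_le_iff₀ hm]
    have : |t| ≤ ⌈|t|⌉₊ := Nat.le_ceil _
    simp only [m, Nat.cast_add, Nat.cast_one]
    linarith
  have hprod : (m : ℂ) * ((t / m : ℝ) : ℂ) = t := by
    rw [Complex.ofReal_div, Complex.ofReal_natCast, mul_div_cancel₀ _ (by exact_mod_cast hm.ne')]
  exact hprod ▸ mul_mem (natCast_mem S m) (ofReal_mem_of_abs_le_two_of_unitArc_subset hn₀ h hsmall)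

lemma eq_top_of_unitArc_subset (hn₀ : 0 < n₀) (h : unitArc n₀ ⊆ S) : S = ⊤ := by
  refine eq_top_iff.2 fun z _ => ?_
  rcases eq_or_ne z 0 with rfl | hz
  · exact zero_mem S
  have hnorm : ((‖z‖ : ℝ) : ℂ) ≠ 0 := by simpa using hz
  have hpolar : ((‖z‖ : ℝ) : ℂ) * (z / ‖z‖) = z := mul_div_cancel₀ z hnorm
  refine hpolar ▸ mul_mem (ofReal_mem_of_unitArc_subset hn₀ h _)
    (mem_of_norm_eq_one_of_unitArc_subset hn₀ h ?_)
  rw [norm_div, Complex.norm_real, Real.norm_of_nonneg (norm_nonneg z),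
    div_self (by simpa using hz)]

end Subsemiring

def AddMonoidHom.conjSMulSubsemiring {F G : Type*} [AddCommGroup F] [Module ℂ F]
    [AddCommGroup G] [Module ℂ G] (g : F →+ G) : Subsemiring ℂ where
  carrier := {l | ∀ x, g (l • x) = starRingEnd ℂ l • g x}
  one_mem' := by simp
  zero_mem' := by simp
  mul_mem' {l m} hl hm x := by rw [mul_smul, hl, hm, map_mul, mul_smul]
  add_mem' {l m} hl hm x := by rw [add_smul, map_add, hl, hm, map_add, add_smul]

section Involution

variable {E : Type*} [NormedRing E] [NormedAlgebra ℂ E]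

lemma one_mem_unitArc (n₀ : ℕ) : (1 : ℂ) ∈ unitArc n₀ :=
  ⟨0, le_rfl, by positivity, by simp⟩

lemma map_add_of_jensenDiff_one_eq_zero {g : E → E} (hg0 : g 0 = 0)
    (hg : ∀ x y, jensenDiff g 1 x y = 0) (x y : E) : g (x + y) = g x + g y := by
  have hxy := hg x y
  have hsum := hg (x + y) 0
  simp only [jensenDiff, map_one, mul_one, one_smul, add_zero, hg0, sub_zero] at hxy hsum
  rw [sub_eq_zero] at hsum
  rw [← hsum, ← sub_eq_zero, ← hxy, sub_sub]

lemma map_smul_of_jensenDiff_eq_zero {g : E → E} {l : ℂ} (hg : ∀ x, jensenDiff g l x x = 0)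
    (x : E) : g (l • x) = starRingEnd ℂ l • g x := by
  have h := hg x
  rw [jensenDiff, ← two_smul ℂ x, inv_smul_smul₀ two_ne_zero, mul_smul, sub_sub, ← two_smul ℂ,
    ← smul_sub, smul_eq_zero] at h
  exact (sub_eq_zero.1 (h.resolve_left two_ne_zero)).symm

lemma conj_linear_of_jensenDiff_eq_zero {g : E → E} {n₀ : ℕ} (hn₀ : 0 < n₀) (hg0 : g 0 = 0)
    (hg : ∀ l ∈ unitArc n₀, ∀ x y, jensenDiff g l x y = 0) (x y : E) (l m : ℂ) :
    g (l • x + m • y) = starRingEnd ℂ l • g x + starRingEnd ℂ m • g y := by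
  have hadd := map_add_of_jensenDiff_one_eq_zero hg0 (hg 1 (one_mem_unitArc n₀))
  have htop : (AddMonoidHom.mk' g hadd).conjSMulSubsemiring = ⊤ :=
    Subsemiring.eq_top_of_unitArc_subset hn₀ fun l hl =>
      map_smul_of_jensenDiff_eq_zero fun x => hg l hl x x
  have hsmul : ∀ (l : ℂ) x, g (l • x) = starRingEnd ℂ l • g x := fun l =>
    show l ∈ (AddMonoidHom.mk' g hadd).conjSMulSubsemiring from htop ▸ Subsemiring.mem_top l
  rw [hadd, hsmul, hsmul]

lemma IsInvolution.map_smul {I : E → E} (hI : IsInvolution I) (l : ℂ) (x : E) :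
    I (l • x) = starRingEnd ℂ l • I x := by
  simpa using hI.1 x 0 l 0

end Involution

theorem stability_involution_rpow_lt_one_general {E : Type*} [NormedRing E] [NormedAlgebra ℂ E]
    (n₀ : ℕ) (hn₀ : 0 < n₀) (r : ℝ) (hr0 : 0 < r) (hr1 : r < 1)
    (θ : ℝ) (hθ : 0 ≤ θ)
    (f : E → E) (hf0 : f 0 = 0)
    (hD : ∀ x y : E, ∀ l ∈ unitArc n₀,
      ‖jensenDiff f l x y‖ ≤ θ * (‖x‖ ^ r + ‖y‖ ^ r))
    (hmul : ∀ x y : E, ‖f (x * y) - f y * f x‖ ≤ θ * (‖x‖ ^ r + ‖y‖ ^ r))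
    (hlim : ∀ x : E, ∃ y : E,
      Tendsto (fun n : ℕ => ((2 : ℂ) ^ n)⁻¹ • f ((2 : ℂ) ^ n • x)) atTop (𝓝 y) ∧
      Tendsto (fun m : ℕ => ((2 : ℂ) ^ m)⁻¹ • f ((2 : ℂ) ^ m • y)) atTop (𝓝 x)) :
    ∃ I : E → E, IsInvolution I ∧
      (∀ x : E, ‖I x - f x‖ ≤ 2 * θ / (2 - (2 : ℝ) ^ r) * ‖x‖ ^ r) ∧
      (∀ J : E → E, IsInvolution J →
        (∀ x : E, ‖J x - f x‖ ≤ 2 * θ / (2 - (2 : ℝ) ^ r) * ‖x‖ ^ r) → J = I) := by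
  choose g hg hgg using hlim
  change ∀ x, Tendsto (doublingSeq f · x) atTop (𝓝 (g x)) at hg
  have hg0 : g 0 = 0 := tendsto_nhds_unique (hg 0) (by simp [doublingSeq, hf0])
  have hjensen : ∀ l ∈ unitArc n₀, ∀ x y, jensenDiff g l x y = 0 := fun l hl =>
    jensenDiff_eq_zero_of_tendsto hr1 (fun x y => hD x y l hl) hg
  have hI : IsInvolution g :=
    ⟨conj_linear_of_jensenDiff_eq_zero hn₀ hg0 hjensen,
      map_mul_rev_of_tendsto (by linarith) hmul hg,
      fun x => tendsto_nhds_unique (hg (g x)) (hgg x)⟩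
  have hgf : ∀ x, ‖g x - f x‖ ≤ 2 * θ / (2 - (2 : ℝ) ^ r) * ‖x‖ ^ r := by
    intro x
    have h2r := two_rpow_lt_two hr1
    exact (norm_sub_le_of_tendsto_doublingSeq (by positivity) hr1
      (norm_map_two_smul_sub_le hr0 hf0 fun x y => hD x y 1 (one_mem_unitArc n₀)) hg x).trans
      (mul_le_mul_of_nonneg_right (div_le_div_of_nonneg_right (by nlinarith) (by linarith))
        (by positivity))
  refine ⟨g, hI, hgf, fun J hJ hJf => funext fun x => sub_eq_zero.1 ?_⟩
  refine eq_zero_of_map_two_smul_of_norm_le (D := fun x => J x - g x)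
    (M := 2 * (2 * θ / (2 - (2 : ℝ) ^ r))) hr1 (fun x => ?_) (fun x => ?_) x
  · simp [hJ.map_smul, hI.map_smul, smul_sub, Complex.conj_ofNat]
  · calc ‖J x - g x‖ ≤ ‖J x - f x‖ + ‖f x - g x‖ := norm_sub_le_norm_sub_add_norm_sub _ _ _
      _ ≤ _ := by linarith [hJf x, norm_sub_rev (f x) (g x) ▸ hgf x]

theorem stability_involution_rpow_lt_one {E : Type*} [NormedRing E] [NormedAlgebra ℂ E] [CompleteSpace E]
    (n₀ : ℕ) (hn₀ : 0 < n₀) (r : ℝ) (hr0 : 0 < r) (hr1 : r < 1)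
    (θ : ℝ) (hθ : 0 ≤ θ)
    (f : E → E) (hf0 : f 0 = 0)
    (hD : ∀ x y : E, ∀ l ∈ unitArc n₀,
      ‖jensenDiff f l x y‖ ≤ θ * (‖x‖ ^ r + ‖y‖ ^ r))
    (hmul : ∀ x y : E, ‖f (x * y) - f y * f x‖ ≤ θ * (‖x‖ ^ r + ‖y‖ ^ r))
    (hlim : ∀ x : E, ∃ y : E,
      Tendsto (fun n : ℕ => ((2 : ℂ) ^ n)⁻¹ • f ((2 : ℂ) ^ n • x)) atTop (𝓝 y) ∧
      Tendsto (fun m : ℕ => ((2 : ℂ) ^ m)⁻¹ • f ((2 : ℂ) ^ m • y)) atTop (𝓝 x)) :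
    ∃ I : E → E, IsInvolution I ∧
      (∀ x : E, ‖I x - f x‖ ≤ 2 * θ / (2 - (2 : ℝ) ^ r) * ‖x‖ ^ r) ∧
      (∀ J : E → E, IsInvolution J →
        (∀ x : E, ‖J x - f x‖ ≤ 2 * θ / (2 - (2 : ℝ) ^ r) * ‖x‖ ^ r) → J = I) :=
  stability_involution_rpow_lt_one_general n₀ hn₀ r hr0 hr1 θ hθ f hf0 hD hmul hlim
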